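/- arXiv:math/0507260 — 2 statements merged into one kernel-verified Lean document; each statement's English description precedes it below -/
import Mathlib

section
/- Every nilpotent group is acyclically closed. -/
/-!
The trivial group is acyclically closed, and acyclic closedness lifts along central extensions
`1 → Z → G → H → 1`. An acyclic monomial has total exponent zero in every variable, so its value
does not change when the variables are multiplied by central elements. Hence a lift `u` of a
solution in `H`, which solves the system in `G` up to central factors, becomes an exact solution
after one round of substitution `u ↦ w(u)`; and two solutions in `G` with the same image in `H`
differ by central elements, hence agree. Induction on the nilpotency class, with `Z` the centre,
finishes the proof.
-/

open Monoid

/-- The projection `G ∗ F_n → H₁(F_n)` killing `G`; a monomial is *acyclic*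
if it lies in its kernel. -/
def acyProj (G : Type*) [Group G] (n : ℕ) :
    Coprod G (FreeGroup (Fin n)) →* Abelianization (FreeGroup (Fin n)) :=
  Coprod.lift 1 Abelianization.of

def IsAcyclicSystem {G : Type*} [Group G] {n : ℕ}
    (w : Fin n → Coprod G (FreeGroup (Fin n))) : Prop :=
  ∀ i, acyProj G n (w i) = 1

def acyEval {G : Type*} [Group G] {n : ℕ} (g : Fin n → G) :
    Coprod G (FreeGroup (Fin n)) →* G :=
  Coprod.lift (MonoidHom.id G) (FreeGroup.lift g)

def IsSolution {G : Type*} [Group G] {n : ℕ}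
    (w : Fin n → Coprod G (FreeGroup (Fin n))) (g : Fin n → G) : Prop :=
  ∀ i, acyEval g (w i) = g i

def AcyclicallyClosed (G : Type*) [Group G] : Prop :=
  ∀ (n : ℕ) (w : Fin n → Coprod G (FreeGroup (Fin n))),
    IsAcyclicSystem w → ∃! g : Fin n → G, IsSolution w g

section CentralExtension

open scoped IsMulCommutative

variable {G H : Type*} [Group G] [Group H] {n : ℕ}

lemma acyProj_map (f : G →* H) (v : Coprod G (FreeGroup (Fin n))) :
    acyProj H n (Coprod.map f (.id _) v) = acyProj G n v := by
  have : (acyProj H n).comp (Coprod.map f (.id _)) = acyProj G n := by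
    apply Coprod.hom_ext <;> ext <;> simp [acyProj]
  exact DFunLike.congr_fun this v

lemma acyEval_map (f : G →* H) (g : Fin n → G) (v : Coprod G (FreeGroup (Fin n))) :
    acyEval (f ∘ g) (Coprod.map f (.id _) v) = f (acyEval g v) := by
  have : (acyEval (f ∘ g)).comp (Coprod.map f (.id _)) = f.comp (acyEval g) := by
    apply Coprod.hom_ext <;> ext <;> simp [acyEval]
  exact DFunLike.congr_fun this v

lemma IsAcyclicSystem.map {w : Fin n → Coprod G (FreeGroup (Fin n))} (hw : IsAcyclicSystem w)
    (f : G →* H) : IsAcyclicSystem (Coprod.map f (.id _) ∘ w) := fun i => by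
  simpa [acyProj_map] using hw i

lemma IsSolution.map {w : Fin n → Coprod G (FreeGroup (Fin n))} {g : Fin n → G}
    (hg : IsSolution w g) (f : G →* H) : IsSolution (Coprod.map f (.id _) ∘ w) (f ∘ g) :=
  fun i => by simp [acyEval_map, hg i]

lemma acyEval_mul_center (g : Fin n → G) (z : Fin n → Subgroup.center G)
    (v : Coprod G (FreeGroup (Fin n))) :
    acyEval (fun i => g i * z i) v =
      acyEval g v * (Abelianization.lift (FreeGroup.lift z) (acyProj G n v) : G) := by
  have comm (x : G) (c : Subgroup.center G) :
      Commute (MonoidHom.id G x) ((Subgroup.center G).subtype c) :=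
    Subgroup.mem_center_iff.mp c.2 x
  let mul : G × Subgroup.center G →* G := (MonoidHom.id G).noncommCoprod _ comm
  have : acyEval (fun i => g i * z i) =
      mul.comp ((acyEval g).prod ((Abelianization.lift (FreeGroup.lift z)).comp (acyProj G n))) := by
    apply Coprod.hom_ext <;> ext <;> simp [mul, acyEval, acyProj]
  exact DFunLike.congr_fun this v

lemma acyEval_eq_of_inv_mul_mem_center {g g' : Fin n → G}
    (h : ∀ i, (g i)⁻¹ * g' i ∈ Subgroup.center G) {v : Coprod G (FreeGroup (Fin n))}
    (hv : acyProj G n v = 1) : acyEval g' v = acyEval g v := by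
  have hg' : g' = fun i => g i * (⟨_, h i⟩ : Subgroup.center G) :=
    funext fun i => (mul_inv_cancel_left (g i) (g' i)).symm
  rw [hg', acyEval_mul_center, hv, map_one, OneMemClass.coe_one, mul_one]

lemma IsSolution.eq_of_inv_mul_mem_center {w : Fin n → Coprod G (FreeGroup (Fin n))}
    (hw : IsAcyclicSystem w) {g g' : Fin n → G} (hg : IsSolution w g) (hg' : IsSolution w g')
    (h : ∀ i, (g i)⁻¹ * g' i ∈ Subgroup.center G) : g' = g :=
  funext fun i => by rw [← hg i, ← hg' i, acyEval_eq_of_inv_mul_mem_center h (hw i)]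

lemma IsAcyclicSystem.isSolution_acyEval {w : Fin n → Coprod G (FreeGroup (Fin n))}
    (hw : IsAcyclicSystem w) {u : Fin n → G}
    (hu : ∀ i, (u i)⁻¹ * acyEval u (w i) ∈ Subgroup.center G) :
    IsSolution w fun i => acyEval u (w i) :=
  fun i => acyEval_eq_of_inv_mul_mem_center hu (hw i)

lemma AcyclicallyClosed.of_subsingleton [Subsingleton G] : AcyclicallyClosed G :=
  fun _ _ _ => ⟨1, fun _ => Subsingleton.elim _ _, fun _ _ => Subsingleton.elim _ _⟩

lemma AcyclicallyClosed.of_surjective_of_ker_le_center (f : G →* H)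
    (hf : Function.Surjective f) (hker : f.ker ≤ Subgroup.center G) (hH : AcyclicallyClosed H) :
    AcyclicallyClosed G := by
  intro n w hw
  obtain ⟨s, hs, hs_unique⟩ := hH n _ (hw.map f)
  have inv_mul_mem {a b : G} (hab : f a = f b) : a⁻¹ * b ∈ Subgroup.center G :=
    hker (by simp [hab])
  choose u hu using fun i => hf (s i)
  have hfu : f ∘ u = s := funext hu
  have hsol : IsSolution w fun i => acyEval u (w i) :=
    hw.isSolution_acyEval fun i => inv_mul_mem (by
      rw [← acyEval_map, hfu]
      exact (hu i).trans (hs i).symm)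
  refine ⟨_, hsol, fun g hg => hsol.eq_of_inv_mul_mem_center hw hg fun i => inv_mul_mem ?_⟩
  exact congrFun ((hs_unique _ (hsol.map f)).trans (hs_unique _ (hg.map f)).symm) i

end CentralExtension

/-- Every nilpotent group is acyclically closed. -/
theorem nilpotent_acyclicallyClosed (G : Type*) [Group G]
    (h : Group.IsNilpotent G) : AcyclicallyClosed G :=
  Group.nilpotent_center_quotient_ind (P := fun G _ _ => AcyclicallyClosed G) G
    (fun _ _ _ => .of_subsingleton)
    (fun _ _ _ ih => ih.of_surjective_of_ker_le_center (QuotientGroup.mk' _)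
      (QuotientGroup.mk'_surjective _) (QuotientGroup.ker_mk' _).le)
end

section
/- Let G be a finitely generated group and H a finitely presentable group, and let f : G → H be 2-connected (isomorphism on H₁, surjection on H₂). Then the induced map f^acy : G^acy → H^acy between acyclic closures is an isomorphism. In particular, for a homology cylinder (M, i₊, i₋) over Σ_{g,1}, both induced maps i±^acy : (F_{2g})^acy → (π₁M)^acy are isomorphisms, so σ^acy(M) := (i₊^acy)⁻¹ ∘ i₋^acy is an automorphism of (F_{2g})^acy. -/
open Monoid

/-- The canonical free presentation `FreeGroup G → G` of a group. -/
def freePres (G : Type*) [Group G] : FreeGroup G →* G := FreeGroup.lift id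

/-- Surjectivity on second group homology `H₂`, expressed via Hopf's formula
`H₂(G) = (R ∩ [F,F])/[F,R]` for the canonical presentation `G = F/R`,
`F = FreeGroup G`: the lift `FreeGroup f : FreeGroup A → FreeGroup B` of `f`
carries `(R_A ∩ [F_A,F_A])` onto `(R_B ∩ [F_B,F_B])` modulo `[F_B,R_B]`. -/
def H2Surjective {A B : Type*} [Group A] [Group B] (f : A →* B) : Prop :=
  ∀ y ∈ (freePres B).ker ⊓ commutator (FreeGroup B),
    ∃ x ∈ (freePres A).ker ⊓ commutator (FreeGroup A),
      y⁻¹ * FreeGroup.map f x ∈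
        ⁅((freePres B).ker : Subgroup (FreeGroup B)), (⊤ : Subgroup (FreeGroup B))⁆

/-- A homomorphism is *2-connected* if it induces an isomorphism on `H₁`
(abelianizations) and a surjection on `H₂`. -/
def TwoConnected {A B : Type*} [Group A] [Group B] (f : A →* B) : Prop :=
  Function.Bijective (Abelianization.map f) ∧ H2Surjective f

/-- A group is finitely presentable if it is isomorphic to a quotient of a
finitely generated free group by the normal closure of finitely many relators. -/
def FinitelyPresentable (G : Type*) [Group G] : Prop :=
  ∃ (m : ℕ) (S : Finset (FreeGroup (Fin m))),
    Nonempty ((FreeGroup (Fin m) ⧸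
      Subgroup.normalClosure (S : Set (FreeGroup (Fin m)))) ≃* G)

/-- `(C, ι)` is an acyclic closure of `G`: `C` is acyclically closed and `ι`
is universal among homomorphisms from `G` to acyclically closed groups. -/
def IsAcyclicClosure {G : Type u} [Group G] (C : Type u) [Group C] (ι : G →* C) : Prop :=
  AcyclicallyClosed C ∧
    ∀ (A : Type u) [Group A], AcyclicallyClosed A →
      ∀ f : G →* A, ∃! f' : C →* A, f'.comp ι = f

/-!
For an acyclically closed group `A`, precomposition with `f` is a bijection
`Hom(H, A) → Hom(G, A)`; by the universal properties this makes `f^acy` invertible.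

To extend `ρ : G → A`, present `H` as a quotient `π : Γ = G ∗ F_n ↠ H` in which the free
generators `x_j` map to commutators `c_j`, and lift `c_j` to commutators `w_j ∈ [Γ, Γ]`. The
homomorphisms `Γ → A` extending `ρ` and killing the relators `x_j w_j⁻¹` are exactly the
solutions of the acyclic system `x_j = ρ(w_j)`, so there is exactly one. It remains to see that
it kills `K = ker π`. Bijectivity on `H₁` shows `K ⊆ (K ∩ [Γ, Γ]) · N` with `N` the normal
closure of the relators, and surjectivity on `H₂` (Hopf's formula, in the central extension
`Γ / [K, Γ]`) gives `K ∩ [Γ, Γ] = [K, Γ]`. Since `K` is finitely normally generated (`Γ` is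
finitely generated, `H` finitely presented), writing its generators as `k_t = d_t n_t` with
`d_t ∈ [K, Γ]`, `n_t ∈ N` yields an acyclic system solved both by the images of the `k_t` and
by `1`; uniqueness kills `K`.
-/

open Function
open scoped commutatorElement

section Commutators

variable {Γ H Q P : Type*} [Group Γ] [Group H] [Group Q] [Group P]

theorem map_commutator_of_surjective {π : Γ →* H} (hπ : Surjective π) :
    (commutator Γ).map π = commutator H := by
  rw [map_commutator_eq, MonoidHom.range_eq_top.2 hπ, commutator_def]

theorem commutatorElement_mul_left_of_mem_center {z : Q} (hz : z ∈ Subgroup.center Q)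
    (x y : Q) : ⁅z * x, y⁆ = ⁅x, y⁆ := by
  have h := Subgroup.mem_center_iff.1 hz (x * y * x⁻¹)
  calc ⁅z * x, y⁆ = z * (x * y * x⁻¹) * z⁻¹ * y⁻¹ := by
        rw [commutatorElement_def]; group
    _ = ⁅x, y⁆ := by rw [← h, commutatorElement_def]; group

theorem commutatorElement_eq_of_mk_center_eq {x x' y y' : Q}
    (hx : (x : Q ⧸ Subgroup.center Q) = x') (hy : (y : Q ⧸ Subgroup.center Q) = y') :
    ⁅x, y⁆ = ⁅x', y'⁆ := by
  rw [QuotientGroup.eq] at hx hy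
  have hx' : x' = x⁻¹ * x' * x := by rw [← Subgroup.mem_center_iff.1 hx x]; group
  have hy' : y' = y⁻¹ * y' * y := by rw [← Subgroup.mem_center_iff.1 hy y]; group
  calc ⁅x, y⁆ = ⁅y, x⁆⁻¹ := (commutatorElement_inv _ _).symm
    _ = ⁅y⁻¹ * y' * y, x⁆⁻¹ := by rw [commutatorElement_mul_left_of_mem_center hy]
    _ = ⁅x, y'⁆ := by rw [← hy', commutatorElement_inv]
    _ = ⁅x', y'⁆ := by rw [hx', commutatorElement_mul_left_of_mem_center hx]

theorem eqOn_commutator_of_comp_mk_center_eq {φ₁ φ₂ : P →* Q}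
    (h : (QuotientGroup.mk' (Subgroup.center Q)).comp φ₁ =
      (QuotientGroup.mk' (Subgroup.center Q)).comp φ₂) :
    Set.EqOn φ₁ φ₂ (commutator P) := by
  have : commutator P ≤ φ₁.eqLocus φ₂ := by
    rw [commutator_def, Subgroup.commutator_le]
    intro p _ q _
    show φ₁ ⁅p, q⁆ = φ₂ ⁅p, q⁆
    rw [map_commutatorElement, map_commutatorElement]
    exact commutatorElement_eq_of_mk_center_eq (DFunLike.congr_fun h p) (DFunLike.congr_fun h q)
  exact fun x hx => this hx

end Commutators

namespace Monoid.Coprod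

variable {G₁ G₂ : Type*} [Group G₁] [Group G₂]

instance instGroupFG [Group.FG G₁] [Group.FG G₂] : Group.FG (Coprod G₁ G₂) := by
  obtain ⟨S₁, hS₁, hS₁fin⟩ := Group.fg_iff.1 ‹Group.FG G₁›
  obtain ⟨S₂, hS₂, hS₂fin⟩ := Group.fg_iff.1 ‹Group.FG G₂›
  refine Group.fg_iff.2
    ⟨inl '' S₁ ∪ inr '' S₂, ?_, (hS₁fin.image _).union (hS₂fin.image _)⟩
  rw [Subgroup.closure_union, ← MonoidHom.map_closure, ← MonoidHom.map_closure, hS₁, hS₂,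
    ← MonoidHom.range_eq_map, ← MonoidHom.range_eq_map, range_inl_sup_range_inr]

theorem mem_commutator_of_fst_of_snd {x : Coprod G₁ G₂}
    (h₁ : Abelianization.of (fst x) = 1) (h₂ : Abelianization.of (snd x) = 1) :
    x ∈ commutator (Coprod G₁ G₂) := by
  have hdecomp : (Abelianization.of : Coprod G₁ G₂ →* _) =
      (Abelianization.map inl).comp (Abelianization.of.comp fst) *
        (Abelianization.map inr).comp (Abelianization.of.comp snd) := by
    ext <;> simp
  rw [← Abelianization.ker_of, MonoidHom.mem_ker, hdecomp]
  simp [h₁, h₂]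

end Monoid.Coprod

section AcyclicSystems

variable {G Γ A : Type*} [Group G] [Group Γ] [Group A] {n : ℕ}

theorem acyProj_eq_one_of_mem_commutator {x : Coprod G (FreeGroup (Fin n))}
    (hx : x ∈ commutator _) : acyProj G n x = 1 :=
  Abelianization.commutator_subset_ker _ hx

theorem acyProj_comp_map (ρ : G →* A) :
    (acyProj A n).comp (Coprod.map ρ (MonoidHom.id _)) = acyProj G n := by
  ext <;> simp [acyProj]

theorem coprodLift_eq_acyEval_comp_map (ρ : G →* A) (a : Fin n → A) :
    Coprod.lift ρ (FreeGroup.lift a) = (acyEval a).comp (Coprod.map ρ (MonoidHom.id _)) := by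
  ext <;> simp [acyEval]

theorem AcyclicallyClosed.existsUnique_lift (hA : AcyclicallyClosed A) (ρ : G →* A)
    {w : Fin n → Coprod G (FreeGroup (Fin n))} (hw : IsAcyclicSystem w) :
    ∃! ψ : Coprod G (FreeGroup (Fin n)) →* A,
      ψ.comp Coprod.inl = ρ ∧ ∀ j, ψ (Coprod.inr (FreeGroup.of j)) = ψ (w j) := by
  set wA := fun j => Coprod.map ρ (MonoidHom.id _) (w j)
  have hwA : IsAcyclicSystem wA := fun j => by
    rw [← hw j, ← acyProj_comp_map ρ, MonoidHom.comp_apply]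
  have hsol : ∀ a, IsSolution wA a ↔ ∀ j, Coprod.lift ρ (FreeGroup.lift a)
      (Coprod.inr (FreeGroup.of j)) = Coprod.lift ρ (FreeGroup.lift a) (w j) := fun a => by
    simp only [IsSolution, coprodLift_eq_acyEval_comp_map, MonoidHom.comp_apply, wA]
    simp [acyEval, eq_comm]
  obtain ⟨a, ha, huniq⟩ := hA n wA hwA
  refine ⟨Coprod.lift ρ (FreeGroup.lift a), ⟨Coprod.lift_comp_inl _ _, (hsol a).1 ha⟩, ?_⟩
  rintro ψ ⟨hψl, hψw⟩
  have hψ : ψ = Coprod.lift ρ (FreeGroup.lift fun j => ψ (Coprod.inr (FreeGroup.of j))) := by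
    ext <;> simp [← hψl]
  have ha' : (fun j => ψ (Coprod.inr (FreeGroup.of j))) = a :=
    huniq _ ((hsol _).2 (by rwa [← hψ]))
  rw [hψ, ha']

theorem commutator_normalClosure_le_map_acyEval {s : ℕ} (k : Fin s → Γ) :
    ⁅Subgroup.normalClosure (Set.range k), ⊤⁆ ≤
      ((acyEval fun _ => (1 : Γ)).ker ⊓ (acyProj Γ s).ker).map (acyEval k) := by
  set L := (acyEval fun _ => (1 : Γ)).ker
  have hsurj : Surjective (acyEval k) := fun γ => ⟨Coprod.inl γ, by simp [acyEval]⟩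
  have hK : Subgroup.normalClosure (Set.range k) ≤ L.map (acyEval k) := by
    have := (MonoidHom.normal_ker (acyEval fun _ => (1 : Γ))).map _ hsurj
    refine Subgroup.normalClosure_le_normal ?_
    rintro _ ⟨t, rfl⟩
    exact ⟨Coprod.inr (FreeGroup.of t), by simp [L, acyEval], by simp [acyEval]⟩
  calc ⁅Subgroup.normalClosure (Set.range k), ⊤⁆
      ≤ ⁅L.map (acyEval k), (⊤ : Subgroup _).map (acyEval k)⁆ := by
        rw [Subgroup.map_top_of_surjective _ hsurj]; exact Subgroup.commutator_mono hK le_rfl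
    _ = (⁅L, ⊤⁆ : Subgroup _).map (acyEval k) := (Subgroup.map_commutator _ _ _).symm
    _ ≤ _ := Subgroup.map_mono (le_inf (Subgroup.commutator_le_left _ _)
        ((Subgroup.commutator_mono le_top le_rfl).trans
          (Abelianization.commutator_subset_ker _)))

theorem AcyclicallyClosed.le_ker_of_le_commutator_sup (hA : AcyclicallyClosed A) {ψ : Γ →* A}
    {K N : Subgroup Γ} [N.Normal] (hK : K.IsFinitelyNormallyGenerated)
    (hKN : K ≤ ⁅K, ⊤⁆ ⊔ N) (hN : N ≤ ψ.ker) : K ≤ ψ.ker := by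
  obtain ⟨T, hT, rfl⟩ := hK
  obtain ⟨s, k, -, rfl⟩ := hT.fin_param
  choose d hd m hm hdm using fun t =>
    Subgroup.mem_sup_of_normal_right.1 (hKN (Subgroup.subset_normalClosure ⟨t, rfl⟩))
  choose v hv hvd using fun t => commutator_normalClosure_le_map_acyEval k (hd t)
  have hv₁ t : acyEval (fun _ => 1) (v t) = 1 := (Subgroup.mem_inf.1 (hv t)).1
  have hv₂ t : acyProj Γ s (v t) = 1 := (Subgroup.mem_inf.1 (hv t)).2
  have hW : IsAcyclicSystem fun t => v t * Coprod.inl (m t) := fun t => by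
    rw [map_mul, hv₂ t]
    simp [acyProj]
  have hk : ψ.comp (acyEval k) = ψ.comp (acyEval fun _ => 1) := by
    refine (hA.existsUnique_lift ψ hW).unique ⟨?_, fun t => ?_⟩ ⟨?_, fun t => ?_⟩
    · ext; simp [acyEval]
    · simp only [MonoidHom.comp_apply, map_mul, hvd]
      simp only [acyEval, Coprod.lift_apply_inr, Coprod.lift_apply_inl, FreeGroup.lift_apply_of,
        MonoidHom.id_apply]
      rw [← map_mul, hdm]
    · ext; simp [acyEval]
    · simp only [MonoidHom.comp_apply, map_mul, hv₁]
      simp [acyEval, MonoidHom.mem_ker.1 (hN (hm t))]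
  refine Subgroup.normalClosure_le_normal ?_
  rintro _ ⟨t, rfl⟩
  simpa [acyEval] using DFunLike.congr_fun hk (Coprod.inr (FreeGroup.of t))

end AcyclicSystems

section Hopf

variable {Γ H P : Type*} [Group Γ] [Group H] [Group P] (π : Γ →* H) {σ : H → Γ}

theorem mk_mem_center_of_mem_ker {κ : Γ} (hκ : κ ∈ π.ker) :
    (κ : Γ ⧸ (⁅π.ker, ⊤⁆ : Subgroup Γ)) ∈
      Subgroup.center (Γ ⧸ (⁅π.ker, ⊤⁆ : Subgroup Γ)) := by
  have hcomm : ⁅π.ker.map (QuotientGroup.mk' ⁅π.ker, ⊤⁆),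
      (⊤ : Subgroup (Γ ⧸ (⁅π.ker, ⊤⁆ : Subgroup Γ)))⁆ = ⊥ := by
    rw [← Subgroup.map_top_of_surjective _ (QuotientGroup.mk'_surjective _),
      ← Subgroup.map_commutator, Subgroup.map_eq_bot_iff, QuotientGroup.ker_mk']
  exact Subgroup.commutator_top_right_eq_bot_iff_le_center.1 hcomm (Subgroup.mem_map_of_mem _ hκ)

theorem map_lift_commutator_ker_le (hσ : RightInverse σ π) :
    (⁅(freePres H).ker, ⊤⁆ : Subgroup _).map (FreeGroup.lift σ) ≤ ⁅π.ker, ⊤⁆ := by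
  have hπσ : π.comp (FreeGroup.lift σ) = freePres H := by
    ext h
    simp [freePres, hσ h]
  rw [Subgroup.map_commutator]
  refine Subgroup.commutator_mono ?_ le_top
  rintro _ ⟨y, hy, rfl⟩
  rwa [MonoidHom.mem_ker, ← MonoidHom.comp_apply, hπσ]

/-- Lifting along the set-theoretic section `σ` is multiplicative only up to the central image of
`ker π`, which commutators do not see. -/
theorem mk_lift_map_eq_mk_freePres (hσ : RightInverse σ π) (β : P →* Γ) {x : FreeGroup P}
    (hx : x ∈ commutator (FreeGroup P)) :
    (FreeGroup.lift σ (FreeGroup.map (π.comp β) x) : Γ ⧸ (⁅π.ker, ⊤⁆ : Subgroup Γ)) =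
      β (freePres P x) := by
  refine eqOn_commutator_of_comp_mk_center_eq (φ₁ := (QuotientGroup.mk' _).comp
    ((FreeGroup.lift σ).comp (FreeGroup.map (π.comp β))))
    (φ₂ := (QuotientGroup.mk' _).comp (β.comp (freePres P))) ?_ hx
  refine FreeGroup.ext_hom _ _ fun p => ?_
  simp only [MonoidHom.comp_apply, FreeGroup.map.of, FreeGroup.lift_apply_of, freePres, id,
    QuotientGroup.mk'_apply, QuotientGroup.eq]
  rw [← QuotientGroup.mk_inv, ← QuotientGroup.mk_mul]
  refine mk_mem_center_of_mem_ker π ?_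
  simp [hσ (π (β p))]

theorem ker_inf_commutator_le_of_h2Surjective {G : Type*} [Group G] {f : G →* H}
    (hf : H2Surjective f) (hπ : Surjective π) {β : G →* Γ} (hβ : π.comp β = f) :
    π.ker ⊓ commutator Γ ≤ ⁅π.ker, ⊤⁆ := by
  subst hβ
  rintro _ ⟨hxK, hxC⟩
  have hσ := rightInverse_surjInv hπ
  have hfree : Surjective (freePres Γ) := FreeGroup.lift_surjective_of_surjective surjective_id
  obtain ⟨x, hx, rfl⟩ := (map_commutator_of_surjective hfree).ge hxC
  have hyC : FreeGroup.map π x ∈ commutator (FreeGroup H) :=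
    (map_commutator_of_surjective (FreeGroup.map_surjective hπ)).le (Subgroup.mem_map_of_mem _ hx)
  have hyR : FreeGroup.map π x ∈ (freePres H).ker := by
    have hnat : (freePres H).comp (FreeGroup.map π) = π.comp (freePres Γ) := by
      ext
      simp [freePres]
    rwa [MonoidHom.mem_ker, ← MonoidHom.comp_apply, hnat]
  obtain ⟨x', ⟨hx'R, hx'C⟩, hrel⟩ := hf _ ⟨hyR, hyC⟩
  have hrel' := map_lift_commutator_ker_le π hσ (Subgroup.mem_map_of_mem _ hrel)
  rw [← QuotientGroup.eq_one_iff, map_mul, map_inv, QuotientGroup.mk_mul,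
    QuotientGroup.mk_inv, inv_mul_eq_one] at hrel'
  -- modulo `⁅ker π, ⊤⁆`:
  -- `freePres Γ x = lift σ (map π x) = lift σ (map (π ∘ β) x') = β (freePres G x') = 1`
  have hxΦ := mk_lift_map_eq_mk_freePres π hσ (MonoidHom.id Γ) hx
  rw [MonoidHom.comp_id, MonoidHom.id_apply] at hxΦ
  rw [← QuotientGroup.eq_one_iff, ← hxΦ, hrel',
    mk_lift_map_eq_mk_freePres π hσ _ hx'C, MonoidHom.mem_ker.1 hx'R, map_one,
    QuotientGroup.mk_one]

end Hopf

section Presentation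

variable {G H ι : Type*} [Group G] [Group H]

theorem exists_mem_normalClosure_mul_inv_mem_commutator {f : G →* H}
    (hf : Injective (Abelianization.map f)) {π : Coprod G (FreeGroup ι) →* H}
    (hπl : π.comp Coprod.inl = f)
    (hπr : ∀ j, π (Coprod.inr (FreeGroup.of j)) ∈ commutator H)
    {w : ι → Coprod G (FreeGroup ι)} (hw : ∀ j, w j ∈ commutator _)
    {k : Coprod G (FreeGroup ι)}
    (hk : k ∈ π.ker) :
    ∃ n ∈ Subgroup.normalClosure (Set.range fun j => Coprod.inr (FreeGroup.of j) * (w j)⁻¹),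
      k * n⁻¹ ∈ commutator _ := by
  set e : FreeGroup ι →* Coprod G (FreeGroup ι) :=
    FreeGroup.lift fun j => Coprod.inr (FreeGroup.of j) * (w j)⁻¹
  have hw' j : Abelianization.of (w j) = 1 := by
    rw [← MonoidHom.mem_ker, Abelianization.ker_of]; exact hw j
  have hw₁ j : Abelianization.of (Coprod.fst (w j)) = 1 := by
    rw [← Abelianization.map_of, hw', map_one]
  have hw₂ j : Abelianization.of (Coprod.snd (w j)) = 1 := by
    rw [← Abelianization.map_of, hw', map_one]
  have he₁ : (Abelianization.of.comp Coprod.fst).comp e = 1 := by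
    ext j
    simp [e, hw₁]
  have he₂ : (Abelianization.of.comp Coprod.snd).comp e = Abelianization.of := by
    ext j
    simp [e, hw₂]
  have hAb : (Abelianization.map f).comp (Abelianization.of.comp Coprod.fst) =
      Abelianization.of.comp π := by
    ext j
    · simp [← hπl]
    · simpa [← Abelianization.ker_of, eq_comm] using hπr j
  have hk₁ : Abelianization.of (Coprod.fst k) = 1 := hf <| by
    simpa [MonoidHom.mem_ker.1 hk] using DFunLike.congr_fun hAb k
  refine ⟨e (Coprod.snd k), ?_, Coprod.mem_commutator_of_fst_of_snd ?_ ?_⟩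
  · exact FreeGroup.range_lift_le Subgroup.subset_normalClosure ⟨Coprod.snd k, rfl⟩
  · simpa [hk₁] using DFunLike.congr_fun he₁ (Coprod.snd k)
  · have h := DFunLike.congr_fun he₂ (Coprod.snd k)
    simp only [MonoidHom.comp_apply] at h
    simp [h]

theorem ker_le_commutator_sup_normalClosure {f : G →* H} (hf : TwoConnected f)
    {π : Coprod G (FreeGroup ι) →* H} (hπ : Surjective π) (hπl : π.comp Coprod.inl = f)
    {w : ι → Coprod G (FreeGroup ι)} (hw : ∀ j, w j ∈ commutator _)
    (hπw : ∀ j, π (w j) = π (Coprod.inr (FreeGroup.of j))) :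
    π.ker ≤ ⁅π.ker, ⊤⁆ ⊔
      Subgroup.normalClosure (Set.range fun j => Coprod.inr (FreeGroup.of j) * (w j)⁻¹) := by
  intro k hk
  have hπr j : π (Coprod.inr (FreeGroup.of j)) ∈ commutator H := by
    rw [← hπw, ← map_commutator_of_surjective hπ]
    exact Subgroup.mem_map_of_mem _ (hw j)
  obtain ⟨n, hn, hkn⟩ :=
    exists_mem_normalClosure_mul_inv_mem_commutator hf.1.injective hπl hπr hw hk
  have hnK : n ∈ π.ker := by
    refine Subgroup.normalClosure_le_normal ?_ hn
    rintro _ ⟨j, rfl⟩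
    simp [hπw]
  have hknK : k * n⁻¹ ∈ ⁅π.ker, ⊤⁆ :=
    ker_inf_commutator_le_of_h2Surjective π hf.2 hπ hπl
      (Subgroup.mem_inf.2 ⟨mul_mem hk (inv_mem hnK), hkn⟩)
  simpa using Subgroup.mul_mem_sup hknK hn

theorem exists_surjective_coprodLift {f : G →* H} (hf : Surjective (Abelianization.map f))
    {n : ℕ} {φ : FreeGroup (Fin n) →* H} (hφ : Surjective φ) :
    ∃ c : Fin n → H,
      (∀ j, c j ∈ commutator H) ∧ Surjective (Coprod.lift f (FreeGroup.lift c)) := by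
  have hu j : ∃ g, Abelianization.of (f g) = Abelianization.of (φ (FreeGroup.of j)) := by
    obtain ⟨a, ha⟩ := hf (Abelianization.of (φ (FreeGroup.of j)))
    obtain ⟨g, rfl⟩ := QuotientGroup.mk_surjective a
    exact ⟨g, ha⟩
  choose u hu using hu
  set c : Fin n → H := fun j => (f (u j))⁻¹ * φ (FreeGroup.of j)
  refine ⟨c, fun j => ?_, ?_⟩
  · rw [← Abelianization.ker_of, MonoidHom.mem_ker, map_mul, map_inv, hu, inv_mul_cancel]
  · have hφ' : Coprod.lift f (FreeGroup.lift c) ∘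
        FreeGroup.lift (fun j => Coprod.inl (u j) * Coprod.inr (FreeGroup.of j)) = φ := by
      rw [← MonoidHom.coe_comp]
      congr 1
      ext j
      simp [c]
    exact Surjective.of_comp (hφ'.symm ▸ hφ)

end Presentation

theorem FinitelyPresentable.isFinitelyPresented {H : Type*} [Group H]
    (hH : FinitelyPresentable H) : Group.IsFinitelyPresented H := by
  obtain ⟨m, S, ⟨θ⟩⟩ := hH
  exact Group.IsFinitelyPresented.equiv (G := PresentedGroup (S : Set (FreeGroup (Fin m)))) θ

theorem MonoidHom.ker_isFinitelyNormallyGenerated_of_surjective {Γ H : Type*} [Group Γ]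
    [Group H] [Group.FG Γ] [Group.IsFinitelyPresented H] {π : Γ →* H} (hπ : Surjective π) :
    π.ker.IsFinitelyNormallyGenerated := by
  obtain ⟨n, φ, hφ, S, hS, hSφ⟩ := ‹Group.IsFinitelyPresented H›.out
  obtain ⟨SΓ, hSΓ, hSΓfin⟩ := Group.fg_iff.1 ‹Group.FG Γ›
  set γ : FreeGroup (Fin n) →* Γ := FreeGroup.lift fun i => surjInv hπ (φ (FreeGroup.of i))
  have hπγ : π.comp γ = φ := by
    ext i
    simp [γ, surjInv_eq hπ]
  -- `Γ ⧸ M` receives a map from `H` through the presentation `φ`, inverse to the one from `π`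
  set κ : Γ → Γ := fun t => t * (γ (surjInv hφ (π t)))⁻¹
  set M := Subgroup.normalClosure (γ '' S ∪ κ '' SΓ)
  refine ⟨γ '' S ∪ κ '' SΓ, (hS.image _).union (hSΓfin.image _),
    le_antisymm (Subgroup.normalClosure_le_normal ?_) ?_⟩
  · rintro _ (⟨s, hs, rfl⟩ | ⟨t, -, rfl⟩)
    · rw [SetLike.mem_coe, MonoidHom.mem_ker, ← MonoidHom.comp_apply, hπγ,
        ← MonoidHom.mem_ker, ← hSφ]
      exact Subgroup.subset_normalClosure hs
    · simp [κ, ← MonoidHom.comp_apply π γ, hπγ, surjInv_eq hφ]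
  · have hγM : φ.ker ≤ ((QuotientGroup.mk' M).comp γ).ker := by
      rw [← hSφ]
      refine Subgroup.normalClosure_le_normal fun s hs => ?_
      have hsM : γ s ∈ M := Subgroup.subset_normalClosure (Or.inl ⟨s, hs, rfl⟩)
      simpa [QuotientGroup.eq_one_iff] using hsM
    set χ := φ.liftOfSurjective hφ ⟨_, hγM⟩
    have hχ : χ.comp π = QuotientGroup.mk' M := by
      refine MonoidHom.eq_of_eqOn_dense hSΓ fun t ht => ?_
      have hκ : κ t ∈ M := Subgroup.subset_normalClosure (Or.inr ⟨t, ht, rfl⟩)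
      rw [← QuotientGroup.eq_one_iff, QuotientGroup.mk_mul, QuotientGroup.mk_inv,
        mul_inv_eq_one] at hκ
      rw [MonoidHom.comp_apply, ← surjInv_eq hφ (π t)]
      simp [χ, hκ]
    intro x hx
    rw [← QuotientGroup.eq_one_iff, ← QuotientGroup.mk'_apply, ← hχ, MonoidHom.comp_apply,
      MonoidHom.mem_ker.1 hx, map_one]

theorem AcyclicallyClosed.existsUnique_comp_eq {G H A : Type*} [Group G] [Group H] [Group A]
    [Group.FG G] [Group.IsFinitelyPresented H] {f : G →* H} (hf : TwoConnected f)
    (hA : AcyclicallyClosed A) (ρ : G →* A) : ∃! ψ : H →* A, ψ.comp f = ρ := by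
  obtain ⟨n, φ, hφ, -⟩ := ‹Group.IsFinitelyPresented H›.out
  obtain ⟨c, hc, hπ⟩ := exists_surjective_coprodLift hf.1.2 hφ
  set π := Coprod.lift f (FreeGroup.lift c)
  have hπl : π.comp Coprod.inl = f := Coprod.lift_comp_inl _ _
  choose w hw hπw using fun j => (map_commutator_of_surjective hπ).ge (hc j)
  have hπw' j : π (w j) = π (Coprod.inr (FreeGroup.of j)) := by simp [π, hπw]
  obtain ⟨ψ, ⟨hψl, hψw⟩, huniq⟩ :=
    hA.existsUnique_lift ρ (w := w) fun j => acyProj_eq_one_of_mem_commutator (hw j)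
  have hψK : π.ker ≤ ψ.ker := by
    refine hA.le_ker_of_le_commutator_sup (π.ker_isFinitelyNormallyGenerated_of_surjective hπ)
      (ker_le_commutator_sup_normalClosure hf hπ hπl hw hπw')
      (Subgroup.normalClosure_le_normal ?_)
    rintro _ ⟨j, rfl⟩
    simp [hψw]
  refine ⟨π.liftOfSurjective hπ ⟨ψ, hψK⟩, ?_, fun ψ' hψ' => ?_⟩
  · show _ = ρ
    rw [← hπl, ← MonoidHom.comp_assoc, MonoidHom.liftOfRightInverse_comp, hψl]
  · refine π.eq_liftOfRightInverse _ _ ψ hψK ψ' (huniq _ ⟨?_, fun j => ?_⟩)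
    · rw [MonoidHom.comp_assoc, hπl, hψ']
    · simp [hπw']

theorem IsAcyclicClosure.hom_ext {G C A : Type u} [Group G] [Group C] [Group A] {ι : G →* C}
    (hC : IsAcyclicClosure C ι) (hA : AcyclicallyClosed A) {φ₁ φ₂ : C →* A}
    (h : φ₁.comp ι = φ₂.comp ι) : φ₁ = φ₂ :=
  (hC.2 A hA _).unique h rfl

/-- If `f : G → H` is a 2-connected homomorphism (isomorphism on `H₁`,
surjection on `H₂`) from a finitely generated group to a finitely presentable
group, then the induced map `f^acy : G^acy → H^acy` on acyclic closures (the
unique homomorphism with `f^acy ∘ ι_G = ι_H ∘ f`) is an isomorphism.  (In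
particular, for a homology cylinder `(M, i₊, i₋)`, both `i±^acy` are
isomorphisms, so `σ^acy(M) = (i₊^acy)⁻¹ ∘ i₋^acy` is an automorphism of
`F_{2g}^acy`.) -/
theorem acyclic_closure_iso {G H : Type u} [Group G] [Group H]
    (hGfg : Group.FG G) (hHfp : FinitelyPresentable H)
    (Gacy Hacy : Type u) [Group Gacy] [Group Hacy]
    (ιG : G →* Gacy) (ιH : H →* Hacy)
    (hG : IsAcyclicClosure Gacy ιG) (hH : IsAcyclicClosure Hacy ιH)
    (f : G →* H) (hf : TwoConnected f)
    (facy : Gacy →* Hacy) (hfacy : facy.comp ιG = ιH.comp f) :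
    Function.Bijective facy := by
  have := hHfp.isFinitelyPresented
  obtain ⟨φ, hφ, -⟩ := hG.1.existsUnique_comp_eq hf ιG
  obtain ⟨g, hg, -⟩ := hH.2 Gacy hG.1 φ
  have hgf : g.comp facy = MonoidHom.id Gacy := hG.hom_ext hG.1 <| by
    rw [MonoidHom.comp_assoc, hfacy, ← MonoidHom.comp_assoc, hg, hφ, MonoidHom.id_comp]
  have hfφ : facy.comp φ = ιH :=
    (hH.1.existsUnique_comp_eq hf (ιH.comp f)).unique
      (by rw [MonoidHom.comp_assoc, hφ, hfacy]) rfl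
  have hfg : facy.comp g = MonoidHom.id Hacy := hH.hom_ext hH.1 <| by
    rw [MonoidHom.comp_assoc, hg, hfφ, MonoidHom.id_comp]
  exact bijective_iff_has_inverse.2 ⟨g, DFunLike.congr_fun hgf, DFunLike.congr_fun hfg⟩
end
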